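/- arXiv:2403.11191 — 7 statements merged into one kernel-verified Lean document; each statement's English description precedes it below -/
import Mathlib

section
/- Let N be a natural number and let (x,y) ∈ ℤ² satisfy x² + y² = 8N + 5. Then: (1) the eight points of the D8-orbit of (x,y) are pairwise distinct (so the dihedral group of order 8 acts freely on the solution set of x² + y² = 8N + 5); and (2) the D8-orbit of (x,y) contains exactly one point of the form (4β₁ − 2, 4β₂ − 1) with β₁, β₂ ∈ ℤ and β₁ + β₂ even. -/
/-! A sum of two squares that is `5 mod 8` has one summand `≡ 2 mod 4` and the other odd,
since odd squares are `1 mod 8` and even squares are `0` or `4 mod 8`. Hence `x, y ≠ 0` and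
`x ≠ ±y`, which makes the eight points of the orbit distinct. Up to the swap `(x, y) ↦ (y, x)`,
which preserves the orbit, `x ≡ 2 mod 4` and `y` is odd; a representative `(4β₁ - 2, 4β₂ - 1)`
must then be one of `(±x, ±y)`, the residue `3 mod 4` of the second coordinate fixes the sign
of `y`, and the parity of `β₁ + β₂`, i.e. the residue of `a + b + 3 mod 8`, fixes the sign
of `x`, because `x` and `-x` differ by `2x ≡ 4 mod 8`. -/

namespace D8Orbit

def orbit (x y : ℤ) : Set (ℤ × ℤ) :=
  {(x, y), (x, -y), (-x, y), (-x, -y), (y, x), (y, -x), (-y, x), (-y, -x)}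

def IsRep (p : ℤ × ℤ) : Prop :=
  ∃ β₁ β₂ : ℤ, p = (4 * β₁ - 2, 4 * β₂ - 1) ∧ Even (β₁ + β₂)

lemma orbit_swap (x y : ℤ) : orbit y x = orbit x y := by
  ext p
  simp only [orbit, Set.mem_insert_iff, Set.mem_singleton_iff]
  tauto

lemma isRep_iff (a b : ℤ) :
    IsRep (a, b) ↔ a % 4 = 2 ∧ b % 4 = 3 ∧ (a + b + 3) % 8 = 0 := by
  constructor
  · rintro ⟨β₁, β₂, hab, hev⟩
    rw [Prod.mk.injEq] at hab
    rw [Int.even_iff] at hev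
    omega
  · rintro ⟨ha, hb, hab⟩
    refine ⟨(a + 2) / 4, (b + 1) / 4, ?_, ?_⟩
    · rw [Prod.mk.injEq]
      omega
    · rw [Int.even_iff]
      omega

lemma parity_of_sq_add_sq_emod_eight_eq_five {x y : ℤ} (h : (x ^ 2 + y ^ 2) % 8 = 5) :
    (x % 4 = 2 ∧ y % 2 = 1) ∨ (x % 2 = 1 ∧ y % 4 = 2) := by
  have hred : (x ^ 2 + y ^ 2) % 8 = ((x % 8) ^ 2 + (y % 8) ^ 2) % 8 := by
    simp [pow_two, Int.add_emod, Int.mul_emod]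
  rw [hred] at h
  have hx : 0 ≤ x % 8 := Int.emod_nonneg x (by norm_num)
  have hx' : x % 8 < 8 := Int.emod_lt_of_pos x (by norm_num)
  have hy : 0 ≤ y % 8 := Int.emod_nonneg y (by norm_num)
  have hy' : y % 8 < 8 := Int.emod_lt_of_pos y (by norm_num)
  generalize ha : x % 8 = a at *
  generalize hb : y % 8 = b at *
  interval_cases a <;> interval_cases b <;> omega

lemma nodup_orbit {x y : ℤ} (hx : x ≠ 0) (hy : y ≠ 0) (hxy : x ≠ y) (hxy' : x ≠ -y) :
    ([(x, y), (x, -y), (-x, y), (-x, -y), (y, x), (y, -x), (-y, x), (-y, -x)] :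
      List (ℤ × ℤ)).Nodup := by
  simp only [List.nodup_cons, List.mem_cons, List.not_mem_nil,
    List.nodup_nil, or_false, and_true, true_and, not_false_eq_true, Prod.mk.injEq, not_or]
  omega

lemma existsUnique_isRep_mem_orbit {x y : ℤ} (hx : x % 4 = 2) (hy : y % 2 = 1) :
    ∃! p, p ∈ orbit x y ∧ IsRep p := by
  obtain ⟨v, hv, hv3⟩ : ∃ v, (v = y ∨ v = -y) ∧ v % 4 = 3 := by
    rcases (by omega : y % 4 = 1 ∨ y % 4 = 3) with h | h
    · exact ⟨-y, Or.inr rfl, by omega⟩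
    · exact ⟨y, Or.inl rfl, h⟩
  obtain ⟨u, hu, hu8⟩ : ∃ u, (u = x ∨ u = -x) ∧ (u + v + 3) % 8 = 0 := by
    by_cases h8 : (x + v + 3) % 8 = 0
    · exact ⟨x, Or.inl rfl, h8⟩
    · exact ⟨-x, Or.inr rfl, by omega⟩
  refine ⟨(u, v), ⟨?_, (isRep_iff u v).2 ⟨by omega, hv3, hu8⟩⟩, ?_⟩
  · rcases hu with rfl | rfl <;> rcases hv with rfl | rfl <;> simp [orbit]
  · rintro ⟨a, b⟩ ⟨hmem, hrep⟩
    rw [isRep_iff] at hrep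
    simp only [orbit, Set.mem_insert_iff, Set.mem_singleton_iff, Prod.mk.injEq] at hmem
    rw [Prod.mk.injEq]
    omega

end D8Orbit

open D8Orbit in
/-- **Theorem (type C₂⁽¹⁾, equation x² + y² = 8N + 5).**
For any integer solution (x,y) of x² + y² = 8N + 5:
(1) the eight points of its D8-orbit are pairwise distinct, and
(2) the D8-orbit contains exactly one point of the form (4β₁ − 2, 4β₂ − 1)
with β₁ + β₂ even. -/
theorem solutions_8N5_D8_free_and_unique_rep (N : ℕ) (x y : ℤ)
    (h : x ^ 2 + y ^ 2 = 8 * (N : ℤ) + 5) :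
    (([(x, y), (x, -y), (-x, y), (-x, -y), (y, x), (y, -x), (-y, x), (-y, -x)] :
        List (ℤ × ℤ)).Nodup) ∧
    (∃! p : ℤ × ℤ,
      p ∈ ({(x, y), (x, -y), (-x, y), (-x, -y), (y, x), (y, -x), (-y, x), (-y, -x)} :
          Set (ℤ × ℤ)) ∧
        ∃ β₁ β₂ : ℤ, p = (4 * β₁ - 2, 4 * β₂ - 1) ∧ Even (β₁ + β₂)) := by
  have hparity := parity_of_sq_add_sq_emod_eight_eq_five (x := x) (y := y) (by omega)
  refine ⟨nodup_orbit (by omega) (by omega) (by omega) (by omega), ?_⟩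
  change ∃! p, p ∈ orbit x y ∧ IsRep p
  rcases hparity with ⟨hx, hy⟩ | ⟨hx, hy⟩
  · exact existsUnique_isRep_mem_orbit hx hy
  · rw [← orbit_swap]
    exact existsUnique_isRep_mem_orbit hy hx
end

section
/- Let N be a natural number and let (x,y) ∈ ℤ² satisfy x² + y² = 8N + 1. Then: (1) the four points of the C4-orbit of (x,y) are pairwise distinct (so the cyclic group of order 4 acts freely on the solution set of x² + y² = 8N + 1); and (2) the C4-orbit of (x,y) contains exactly one point of the form (4q₁, 4q₂ + 1) with q₁, q₂ ∈ ℤ. -/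
/-! Squares are `0, 1, 4` modulo `8`, and a square is `0` modulo `8` exactly for multiples of `4`.
So `x² + y² ≡ 1 (mod 8)` forces one coordinate to be `≡ 0 (mod 4)` and the other to be odd.
The rotation `(x, y) ↦ (-y, x)` permutes the four residue classes `(0, 1), (3, 0), (0, 3), (1, 0)`
modulo `4` cyclically, so the orbit meets `(0, 1)` exactly once; and it acts freely because
`(x, y) ≠ 0`. -/

namespace Int

theorem sq_emod_eight_cases (x : ℤ) :
    (x % 4 = 0 ∧ x ^ 2 % 8 = 0) ∨ (x % 2 = 1 ∧ x ^ 2 % 8 = 1) ∨ (x % 4 = 2 ∧ x ^ 2 % 8 = 4) := by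
  have hsq : x ^ 2 % 8 = (x % 8) ^ 2 % 8 := by rw [pow_two, pow_two, Int.mul_emod]
  have hx4 : x % 4 = x % 8 % 4 := (Int.emod_emod_of_dvd x (by norm_num)).symm
  have hx2 : x % 2 = x % 8 % 2 := (Int.emod_emod_of_dvd x (by norm_num)).symm
  have h0 : 0 ≤ x % 8 := Int.emod_nonneg x (by norm_num)
  have h8 : x % 8 < 8 := Int.emod_lt_of_pos x (by norm_num)
  rw [hsq, hx4, hx2]
  interval_cases x % 8 <;> simp

theorem emod_four_of_sq_add_sq_emod_eight_eq_one {x y : ℤ} (h : (x ^ 2 + y ^ 2) % 8 = 1) :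
    (x % 4 = 0 ∧ y % 2 = 1) ∨ (x % 2 = 1 ∧ y % 4 = 0) := by
  rcases sq_emod_eight_cases x with hx | hx | hx <;>
  rcases sq_emod_eight_cases y with hy | hy | hy <;> omega

end Int

theorem list_nodup_rotation_orbit {x y : ℤ} (hxy : (x, y) ≠ 0) :
    ([(x, y), (-y, x), (-x, -y), (y, -x)] : List (ℤ × ℤ)).Nodup := by
  simp only [ne_eq, Prod.ext_iff, Prod.fst_zero, Prod.snd_zero] at hxy
  simp only [List.nodup_cons, List.mem_cons, List.not_mem_nil, List.nodup_nil, Prod.mk.injEq,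
    or_false, not_false_eq_true, and_true]
  omega

theorem exists_eq_four_mul_four_mul_add_one_iff (p : ℤ × ℤ) :
    (∃ q₁ q₂ : ℤ, p = (4 * q₁, 4 * q₂ + 1)) ↔ p.1 % 4 = 0 ∧ p.2 % 4 = 1 := by
  constructor
  · rintro ⟨q₁, q₂, rfl⟩
    omega
  · rintro ⟨h₁, h₂⟩
    exact ⟨p.1 / 4, p.2 / 4, Prod.ext (by omega) (by omega)⟩

theorem existsUnique_mem_rotation_orbit_emod_four {x y : ℤ}
    (h : (x % 4 = 0 ∧ y % 2 = 1) ∨ (x % 2 = 1 ∧ y % 4 = 0)) :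
    ∃! p : ℤ × ℤ, p ∈ ({(x, y), (-y, x), (-x, -y), (y, -x)} : Set (ℤ × ℤ)) ∧
      (p.1 % 4 = 0 ∧ p.2 % 4 = 1) := by
  refine existsUnique_of_exists_of_unique ?_ ?_
  · simp only [Set.mem_insert_iff, Set.mem_singleton_iff, or_and_right, exists_or,
      exists_eq_left]
    omega
  · rintro p p' ⟨hp, hp₁, hp₂⟩ ⟨hp', hp₁', hp₂'⟩
    simp only [Set.mem_insert_iff, Set.mem_singleton_iff] at hp hp'
    rcases hp with rfl | rfl | rfl | rfl <;> rcases hp' with rfl | rfl | rfl | rfl <;>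
      simp only [Prod.ext_iff] at * <;> omega

/-- **Theorem (type C₂⁽¹⁾, equation x² + y² = 8N + 1).**
For any integer solution (x,y) of x² + y² = 8N + 1:
(1) the four points of its C4-orbit are pairwise distinct, and
(2) the C4-orbit contains exactly one point of the form (4q₁, 4q₂ + 1). -/
theorem solutions_8N1_C4_free_and_unique_rep (N : ℕ) (x y : ℤ)
    (h : x ^ 2 + y ^ 2 = 8 * (N : ℤ) + 1) :
    (([(x, y), (-y, x), (-x, -y), (y, -x)] : List (ℤ × ℤ)).Nodup) ∧
    (∃! p : ℤ × ℤ,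
      p ∈ ({(x, y), (-y, x), (-x, -y), (y, -x)} : Set (ℤ × ℤ)) ∧
        ∃ q₁ q₂ : ℤ, p = (4 * q₁, 4 * q₂ + 1)) := by
  have hres := Int.emod_four_of_sq_add_sq_emod_eight_eq_one (by rw [h]; omega)
  have hxy : (x, y) ≠ 0 := by
    simp only [ne_eq, Prod.ext_iff, Prod.fst_zero, Prod.snd_zero]
    omega
  simpa only [exists_eq_four_mul_four_mul_add_one_iff] using
    ⟨list_nodup_rotation_orbit hxy, existsUnique_mem_rotation_orbit_emod_four hres⟩
end

section
/- Let N be a natural number and let (x,y) ∈ ℤ² satisfy x² + y² = 12N + 5. Then: (1) the eight points of the D8-orbit of (x,y) are pairwise distinct (so the dihedral group of order 8 acts freely on the solution set of x² + y² = 12N + 5); and (2) the D8-orbit of (x,y) contains exactly one point of the form (6β₁ − 2, 6β₂ − 1) with β₁, β₂ ∈ ℤ. -/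
/-!
Squares are 0 or 1 modulo 3 and modulo 4, so x² + y² ≡ 5 (mod 12) forces x and y to be prime
to 3 and of opposite parity. Hence x, y, x ± y are all nonzero, which makes the eight points of
the orbit distinct. In an orbit point of the form (6β₁ − 2, 6β₂ − 1) the first coordinate is the
even one of ±x, ±y and the second the odd one, and for an integer prime to 3 exactly one of its
two signs has a prescribed residue modulo 6 of the right parity.
-/

theorem Int.sq_emod_three (x : ℤ) : x ^ 2 % 3 = if x % 3 = 0 then 0 else 1 := by
  have h₀ := Int.emod_nonneg x (by norm_num : (3 : ℤ) ≠ 0)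
  have h₃ := Int.emod_lt_of_pos x (by norm_num : (0 : ℤ) < 3)
  rw [sq, Int.mul_emod]
  interval_cases x % 3 <;> rfl

theorem Int.sq_emod_four (x : ℤ) : x ^ 2 % 4 = if x % 2 = 0 then 0 else 1 := by
  have h₀ := Int.emod_nonneg x (by norm_num : (4 : ℤ) ≠ 0)
  have h₄ := Int.emod_lt_of_pos x (by norm_num : (0 : ℤ) < 4)
  rw [sq, Int.mul_emod, ← Int.emod_emod_of_dvd x (by norm_num : (2 : ℤ) ∣ 4)]
  interval_cases x % 4 <;> rfl

theorem Int.emod_three_ne_zero_and_emod_two_ne_of_sq_add_sq_emod_twelve {x y : ℤ}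
    (h : (x ^ 2 + y ^ 2) % 12 = 5) : x % 3 ≠ 0 ∧ y % 3 ≠ 0 ∧ x % 2 ≠ y % 2 := by
  have h₃ := Int.sq_emod_three x
  have h₃' := Int.sq_emod_three y
  have h₄ := Int.sq_emod_four x
  have h₄' := Int.sq_emod_four y
  split_ifs at h₃ h₃' h₄ h₄' <;> omega

theorem Int.existsUnique_abs_eq_emod_six_eq {z r : ℤ} (hzr : z % 2 = r % 2) (hz : z % 3 ≠ 0)
    (hr : r % 3 ≠ 0) : ∃! a : ℤ, |a| = |z| ∧ a % 6 = r % 6 := by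
  refine ⟨if z % 6 = r % 6 then z else -z, ?_, ?_⟩
  · split_ifs with h
    · exact ⟨rfl, h⟩
    · -- z ≡ -r (mod 3), and z ≡ -r (mod 2) holds anyway
      have : z % 3 + r % 3 = 3 := by omega
      exact ⟨abs_neg z, by omega⟩
  · rintro a ⟨ha, ha₆⟩
    split_ifs <;> rcases abs_eq_abs.1 ha with rfl | rfl <;> omega

def d8Orbit (x y : ℤ) : Set (ℤ × ℤ) :=
  {(x, y), (x, -y), (-x, y), (-x, -y), (y, x), (y, -x), (-y, x), (-y, -x)}

theorem mem_d8Orbit_iff {x y : ℤ} {p : ℤ × ℤ} :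
    p ∈ d8Orbit x y ↔ |p.1| = |x| ∧ |p.2| = |y| ∨ |p.1| = |y| ∧ |p.2| = |x| := by
  obtain ⟨a, b⟩ := p
  simp only [d8Orbit, Set.mem_insert_iff, Set.mem_singleton_iff, Prod.mk.injEq, abs_eq_abs]
  tauto

theorem d8Orbit_comm (x y : ℤ) : d8Orbit y x = d8Orbit x y := by
  ext p
  simp only [mem_d8Orbit_iff, or_comm]

theorem d8Orbit_list_nodup {x y : ℤ} (hx : x ≠ 0) (hy : y ≠ 0) (hxy : x ≠ y) (hxy' : x ≠ -y) :
    [(x, y), (x, -y), (-x, y), (-x, -y), (y, x), (y, -x), (-y, x), (-y, -x)].Nodup := by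
  simp only [List.nodup_cons, List.mem_cons, List.not_mem_nil, Prod.mk.injEq, List.nodup_nil,
    true_and, and_true, or_false, not_false_eq_true]
  omega

theorem exists_eq_six_mul_sub_iff (p : ℤ × ℤ) :
    (∃ β₁ β₂ : ℤ, p = (6 * β₁ - 2, 6 * β₂ - 1)) ↔ p.1 % 6 = 4 ∧ p.2 % 6 = 5 := by
  constructor
  · rintro ⟨β₁, β₂, rfl⟩
    omega
  · intro h
    exact ⟨(p.1 + 2) / 6, (p.2 + 1) / 6, Prod.ext (by omega) (by omega)⟩

theorem existsUnique_mem_d8Orbit_emod_six {x y : ℤ} (hx : x % 3 ≠ 0) (hy : y % 3 ≠ 0)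
    (hxy : x % 2 ≠ y % 2) : ∃! p ∈ d8Orbit x y, p.1 % 6 = 4 ∧ p.2 % 6 = 5 := by
  wlog hx₂ : x % 2 = 0 generalizing x y
  · rw [← d8Orbit_comm]
    exact this hy hx hxy.symm (by omega)
  obtain ⟨a, ⟨ha, ha₆⟩, ha_unique⟩ :=
    Int.existsUnique_abs_eq_emod_six_eq (z := x) (r := 4) (by omega) hx (by norm_num)
  obtain ⟨b, ⟨hb, hb₆⟩, hb_unique⟩ :=
    Int.existsUnique_abs_eq_emod_six_eq (z := y) (r := 5) (by omega) hy (by norm_num)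
  refine ⟨(a, b), ⟨mem_d8Orbit_iff.2 (Or.inl ⟨ha, hb⟩), by omega, by omega⟩, ?_⟩
  rintro ⟨c, d⟩ ⟨hcd, hc₆, hd₆⟩
  rcases mem_d8Orbit_iff.1 hcd with ⟨hc, hd⟩ | ⟨hc, -⟩
  · exact Prod.ext (ha_unique c ⟨hc, by omega⟩) (hb_unique d ⟨hd, by omega⟩)
  · -- c ≡ 4 (mod 6) is even, y is odd
    rcases abs_eq_abs.1 hc with rfl | rfl <;> omega

/-- **Theorem (type D₃⁽²⁾, equation x² + y² = 12N + 5).**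
For any integer solution (x,y) of x² + y² = 12N + 5:
(1) the eight points of its D8-orbit are pairwise distinct, and
(2) the D8-orbit contains exactly one point of the form (6β₁ − 2, 6β₂ − 1). -/
theorem solutions_12N5_D8_free_and_unique_rep (N : ℕ) (x y : ℤ)
    (h : x ^ 2 + y ^ 2 = 12 * (N : ℤ) + 5) :
    (([(x, y), (x, -y), (-x, y), (-x, -y), (y, x), (y, -x), (-y, x), (-y, -x)] :
        List (ℤ × ℤ)).Nodup) ∧
    (∃! p : ℤ × ℤ,
      p ∈ ({(x, y), (x, -y), (-x, y), (-x, -y), (y, x), (y, -x), (-y, x), (-y, -x)} :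
          Set (ℤ × ℤ)) ∧
        ∃ β₁ β₂ : ℤ, p = (6 * β₁ - 2, 6 * β₂ - 1)) := by
  have h₁₂ : (x ^ 2 + y ^ 2) % 12 = 5 := by omega
  obtain ⟨hx, hy, hxy⟩ := Int.emod_three_ne_zero_and_emod_two_ne_of_sq_add_sq_emod_twelve h₁₂
  refine ⟨d8Orbit_list_nodup (by omega) (by omega) (by omega) (by omega), ?_⟩
  simp only [exists_eq_six_mul_sub_iff]
  exact existsUnique_mem_d8Orbit_emod_six hx hy hxy
end

section
/- Let N be a natural number and let (x,y) ∈ ℤ² satisfy x² + 3y² = 12N + 7. Then: (1) the four points of the V4-orbit of (x,y) are pairwise distinct (so the Klein four-group acts freely on the solution set of x² + 3y² = 12N + 7); and (2) the V4-orbit of (x,y) contains exactly one point of the form (6β₂ + 2, 4β₁ + 2β₂ + 1) with β₁, β₂ ∈ ℤ. -/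
/-!
Reducing `x² + 3y² = 12N + 7` modulo 4 and modulo 3 shows that `x` is even and prime to 3 and
that `y` is odd. In particular `x` and `y` are nonzero, so the sign changes act freely. Since
`(a, b) = (6β₂ + 2, 4β₁ + 2β₂ + 1)` says exactly `a ≡ 2 [6]` and `a + 1 ≡ 3b [12]`,
the sign of `x` is forced by `x ≢ 0 [3]`, and then the sign of `y` by `y ≢ -y [4]`.
-/

theorem List.nodup_sign_changes {R : Type*} [InvolutiveNeg R] {x y : R} (hx : x ≠ -x)
    (hy : y ≠ -y) : [(x, y), (-x, y), (x, -y), (-x, -y)].Nodup := by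
  simp [hx, hy, hx.symm]

theorem Set.mem_sign_changes_iff {R : Type*} [Neg R] {x y : R} {p : R × R} :
    p ∈ ({(x, y), (-x, y), (x, -y), (-x, -y)} : Set (R × R)) ↔
      (p.1 = x ∨ p.1 = -x) ∧ (p.2 = y ∨ p.2 = -y) := by
  obtain ⟨a, b⟩ := p
  simp only [Set.mem_insert_iff, Set.mem_singleton_iff, Prod.mk.injEq]
  tauto

namespace Int

theorem emod_two_of_sq_add_three_mul_sq_emod_four {x y : ℤ} (h : (x ^ 2 + 3 * y ^ 2) % 4 = 3) :
    x % 2 = 0 ∧ y % 2 = 1 := by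
  obtain ⟨k, rfl | rfl⟩ := even_or_odd' x <;> obtain ⟨m, rfl | rfl⟩ := even_or_odd' y <;>
    ring_nf at h <;> omega

theorem emod_three_ne_zero_of_sq_add_three_mul_sq_emod_three {x y : ℤ}
    (h : (x ^ 2 + 3 * y ^ 2) % 3 = 1) : x % 3 ≠ 0 := by
  intro hx
  obtain ⟨k, rfl⟩ := dvd_of_emod_eq_zero hx
  ring_nf at h
  omega

theorem exists_eq_rep_iff (a b : ℤ) :
    (∃ β₁ β₂ : ℤ, (a, b) = (6 * β₂ + 2, 4 * β₁ + 2 * β₂ + 1)) ↔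
      a % 6 = 2 ∧ (a + 1 - 3 * b) % 12 = 0 := by
  constructor
  · rintro ⟨β₁, β₂, hab⟩
    simp only [Prod.mk.injEq] at hab
    omega
  · rintro ⟨ha, hab⟩
    refine ⟨(3 * b - a - 1) / 12, (a - 2) / 6, ?_⟩
    simp only [Prod.mk.injEq]
    omega

theorem existsUnique_rep_mem_sign_changes {x y : ℤ} (hx2 : x % 2 = 0) (hx3 : x % 3 ≠ 0)
    (hy : y % 2 = 1) :
    ∃! p : ℤ × ℤ, p ∈ ({(x, y), (-x, y), (x, -y), (-x, -y)} : Set (ℤ × ℤ)) ∧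
      ∃ β₁ β₂ : ℤ, p = (6 * β₂ + 2, 4 * β₁ + 2 * β₂ + 1) := by
  obtain ⟨a, hax, ha⟩ : ∃ a, (a = x ∨ a = -x) ∧ a % 6 = 2 := by
    rcases (by omega : x % 6 = 2 ∨ -x % 6 = 2) with h | h
    exacts [⟨x, .inl rfl, h⟩, ⟨-x, .inr rfl, h⟩]
  obtain ⟨b, hby, hb⟩ : ∃ b, (b = y ∨ b = -y) ∧ (a + 1 - 3 * b) % 12 = 0 := by
    rcases (by omega : (a + 1 - 3 * y) % 12 = 0 ∨ (a + 1 - 3 * -y) % 12 = 0) with h | h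
    exacts [⟨y, .inl rfl, h⟩, ⟨-y, .inr rfl, h⟩]
  refine ⟨(a, b),
    ⟨Set.mem_sign_changes_iff.2 ⟨hax, hby⟩, (exists_eq_rep_iff a b).2 ⟨ha, hb⟩⟩, ?_⟩
  rintro ⟨c, d⟩ ⟨hcd, hrep⟩
  rw [Set.mem_sign_changes_iff] at hcd
  rw [exists_eq_rep_iff] at hrep
  simp only [Prod.mk.injEq]
  omega

end Int

/-- **Theorem (type D₄⁽³⁾, equation x² + 3y² = 12N + 7).**
For any integer solution (x,y) of x² + 3y² = 12N + 7:
(1) the four points of its V4-orbit are pairwise distinct, and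
(2) the V4-orbit contains exactly one point of the form (6β₂ + 2, 4β₁ + 2β₂ + 1). -/
theorem solutions_12N7_V4_free_and_unique_rep (N : ℕ) (x y : ℤ)
    (h : x ^ 2 + 3 * y ^ 2 = 12 * (N : ℤ) + 7) :
    (([(x, y), (-x, y), (x, -y), (-x, -y)] : List (ℤ × ℤ)).Nodup) ∧
    (∃! p : ℤ × ℤ,
      p ∈ ({(x, y), (-x, y), (x, -y), (-x, -y)} : Set (ℤ × ℤ)) ∧
        ∃ β₁ β₂ : ℤ, p = (6 * β₂ + 2, 4 * β₁ + 2 * β₂ + 1)) := by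
  obtain ⟨hx2, hy⟩ : x % 2 = 0 ∧ y % 2 = 1 :=
    Int.emod_two_of_sq_add_three_mul_sq_emod_four (by omega)
  have hx3 : x % 3 ≠ 0 :=
    Int.emod_three_ne_zero_of_sq_add_three_mul_sq_emod_three (y := y) (by omega)
  exact ⟨List.nodup_sign_changes (by omega) (by omega),
    Int.existsUnique_rep_mem_sign_changes hx2 hx3 hy⟩
end

section
/- Let N be a natural number and let (x,y) ∈ ℤ² satisfy x² + 3y² = 12N + 4. Then x ≡ y (mod 2), so that R(x,y) = ((x − 3y)/2, (x + y)/2) is again an integer point satisfying x² + 3y² = 12N + 4, and R has order 6. Moreover: (1) the six points Rᵏ(x,y) for 0 ≤ k ≤ 5 are pairwise distinct (so the cyclic group ⟨R⟩ of order 6 acts freely on the solution set); and (2) exactly one of the six points Rᵏ(x,y), 0 ≤ k ≤ 5, is of the form (3β₁ + 6β₂ − 1, 3β₁ − 1) with β₁, β₂ ∈ ℤ. -/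
/-!
Since 12N + 4 is even, x ≡ y (mod 2), so the solutions are the points (y + 2t, y) with
y² + yt + t² = 3N + 1. In the coordinates (y, t) the rotation R is the integral map
(y, t) ↦ (y + t, -y), which preserves y² + yt + t²; this gives integrality and invariance of the
equation along the orbit. Modulo 3 the form y² + yt + t² ≡ (y - t)² equals 1, so (y, t) lies off
the diagonal of (ℤ/3)², and on those six classes the rotation acts as a single 6-cycle. Hence the
six iterates are already distinct mod 3, and exactly one of them lands in the class (2, 0), which is
the class of the points (3β₁ + 6β₂ - 1, 3β₁ - 1).
-/

/-- The rotation `R` of the plane with matrix `(1/2)[[1, −3], [1, 1]]`: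
`R(x,y) = ((x − 3y)/2, (x + y)/2)`. It preserves the quadratic form `x² + 3y²`
and has order 6. -/
def Rrot : ℚ × ℚ → ℚ × ℚ := fun p => ((p.1 - 3 * p.2) / 2, (p.1 + p.2) / 2)

def eisensteinRot {R : Type*} [Ring R] (p : R × R) : R × R := (p.1 + p.2, -p.1)

def eisensteinNorm {R : Type*} [CommRing R] (p : R × R) : R := p.1 ^ 2 + p.1 * p.2 + p.2 ^ 2

def toPlane (p : ℤ × ℤ) : ℚ × ℚ := (((p.1 + 2 * p.2 : ℤ) : ℚ), ((p.1 : ℤ) : ℚ))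

lemma eisensteinNorm_eisensteinRot {R : Type*} [CommRing R] (p : R × R) :
    eisensteinNorm (eisensteinRot p) = eisensteinNorm p := by
  simp only [eisensteinNorm, eisensteinRot]
  ring

lemma eisensteinNorm_eisensteinRot_iterate {R : Type*} [CommRing R] (k : ℕ) (p : R × R) :
    eisensteinNorm (eisensteinRot^[k] p) = eisensteinNorm p := by
  induction k generalizing p with
  | zero => rfl
  | succ k ih => rw [Function.iterate_succ_apply, ih, eisensteinNorm_eisensteinRot]

lemma eisensteinRot_intCast {R : Type*} [Ring R] (p : ℤ × ℤ) :
    eisensteinRot (Prod.map Int.cast Int.cast p : R × R) =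
      Prod.map Int.cast Int.cast (eisensteinRot p) := by
  simp [eisensteinRot]

lemma eisensteinRot_iterate_intCast {R : Type*} [Ring R] (k : ℕ) (p : ℤ × ℤ) :
    eisensteinRot^[k] (Prod.map Int.cast Int.cast p : R × R) =
      Prod.map Int.cast Int.cast (eisensteinRot^[k] p) :=
  (Function.Semiconj.iterate_right (f := Prod.map Int.cast Int.cast)
    (fun q => (eisensteinRot_intCast q).symm) k p).symm

lemma eisensteinNorm_intCast {R : Type*} [CommRing R] (p : ℤ × ℤ) :
    eisensteinNorm (Prod.map Int.cast Int.cast p : R × R) = ((eisensteinNorm p : ℤ) : R) := by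
  simp [eisensteinNorm]

lemma injective_eisensteinRot_iterate_zmod_three (q : ZMod 3 × ZMod 3)
    (hq : eisensteinNorm q = 1) : Function.Injective fun k : Fin 6 => eisensteinRot^[k] q := by
  revert q
  decide

lemma existsUnique_eisensteinRot_iterate_zmod_three (q : ZMod 3 × ZMod 3)
    (hq : eisensteinNorm q = 1) : ∃! k : Fin 6, eisensteinRot^[k] q = (2, 0) := by
  obtain ⟨k, hk⟩ : ∃ k : Fin 6, eisensteinRot^[k] q = (2, 0) := by
    revert q hq
    decide
  exact ⟨k, hk, fun l hl => injective_eisensteinRot_iterate_zmod_three q hq (hl.trans hk.symm)⟩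

lemma emod_two_eq_of_even_sq_add_three_mul_sq {x y : ℤ} (h : Even (x ^ 2 + 3 * y ^ 2)) :
    x % 2 = y % 2 := by
  rw [Int.even_add, Int.even_mul, Int.even_pow, Int.even_pow] at h
  simp only [Int.even_iff] at h
  omega

lemma sq_add_three_mul_sq_eq_four_mul_eisensteinNorm (p : ℤ × ℤ) :
    (p.1 + 2 * p.2) ^ 2 + 3 * p.1 ^ 2 = 4 * eisensteinNorm p := by
  simp only [eisensteinNorm]
  ring

lemma toPlane_injective : Function.Injective toPlane := by
  rintro ⟨a, b⟩ ⟨c, d⟩ h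
  simp only [toPlane, Prod.mk.injEq, Int.cast_inj] at h
  ext <;> omega

lemma Rrot_iterate_six : Rrot^[6] = id := by
  funext p
  ext <;> simp only [Function.iterate_succ, Function.comp_apply, Function.iterate_zero, id, Rrot]
    <;> ring

lemma semiconj_toPlane_eisensteinRot : Function.Semiconj toPlane eisensteinRot Rrot := by
  intro p
  simp only [toPlane, eisensteinRot, Rrot, Prod.mk.injEq]
  push_cast
  constructor <;> ring

lemma Rrot_iterate_toPlane (k : ℕ) (p : ℤ × ℤ) :
    Rrot^[k] (toPlane p) = toPlane (eisensteinRot^[k] p) :=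
  (semiconj_toPlane_eisensteinRot.iterate_right k p).symm

lemma exists_toPlane_eq_iff (q : ℤ × ℤ) :
    (∃ β₁ β₂ : ℤ, toPlane q = (((3 * β₁ + 6 * β₂ - 1 : ℤ) : ℚ), ((3 * β₁ - 1 : ℤ) : ℚ))) ↔
      (Prod.map Int.cast Int.cast q : ZMod 3 × ZMod 3) = (2, 0) := by
  have h2 : (2 : ZMod 3) = ((2 : ℤ) : ZMod 3) := rfl
  simp only [toPlane, Prod.mk.injEq, Int.cast_inj, Prod.map, h2, ZMod.intCast_eq_intCast_iff',
    ZMod.intCast_zmod_eq_zero_iff_dvd]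
  constructor
  · rintro ⟨β₁, β₂, h1, h2⟩
    omega
  · rintro ⟨h1, h2⟩
    exact ⟨(q.1 + 1) / 3, q.2 / 3, by omega, by omega⟩

/-- **Theorem (type A₂⁽¹⁾, equation x² + 3y² = 12N + 4).**
For any integer solution (x,y) of x² + 3y² = 12N + 4:
x ≡ y (mod 2), so each iterate Rᵏ(x,y) is again an integer solution, R⁶ = id,
(1) the six points Rᵏ(x,y), 0 ≤ k ≤ 5, are pairwise distinct, and
(2) exactly one of the six points Rᵏ(x,y) is of the form
(3β₁ + 6β₂ − 1, 3β₁ − 1) with β₁, β₂ ∈ ℤ. -/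
theorem solutions_12N4_C6_free_and_unique_rep (N : ℕ) (x y : ℤ)
    (h : x ^ 2 + 3 * y ^ 2 = 12 * (N : ℤ) + 4) :
    x % 2 = y % 2 ∧
    (∀ k : ℕ, ∃ a b : ℤ,
      Rrot^[k] ((x : ℚ), (y : ℚ)) = ((a : ℚ), (b : ℚ)) ∧
      a ^ 2 + 3 * b ^ 2 = 12 * (N : ℤ) + 4) ∧
    Rrot^[6] = id ∧
    (∀ k l : Fin 6,
      Rrot^[k.1] ((x : ℚ), (y : ℚ)) = Rrot^[l.1] ((x : ℚ), (y : ℚ)) → k = l) ∧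
    (∃! k : Fin 6, ∃ β₁ β₂ : ℤ,
      Rrot^[k.1] ((x : ℚ), (y : ℚ)) =
        (((3 * β₁ + 6 * β₂ - 1 : ℤ) : ℚ), ((3 * β₁ - 1 : ℤ) : ℚ))) := by
  have hpar : x % 2 = y % 2 := emod_two_eq_of_even_sq_add_three_mul_sq ⟨6 * N + 2, by omega⟩
  obtain ⟨t, rfl⟩ : ∃ t, x = y + 2 * t := ⟨(x - y) / 2, by omega⟩
  set p : ℤ × ℤ := (y, t)
  rw [show ((↑(y + 2 * t) : ℚ), (↑y : ℚ)) = toPlane p from rfl]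
  have hp : eisensteinNorm p = 3 * N + 1 := by
    linarith [sq_add_three_mul_sq_eq_four_mul_eisensteinNorm p]
  have hp₃ : eisensteinNorm (Prod.map Int.cast Int.cast p : ZMod 3 × ZMod 3) = 1 := by
    rw [eisensteinNorm_intCast, hp]
    push_cast
    rw [show (3 : ZMod 3) = 0 from rfl, zero_mul, zero_add]
  refine ⟨hpar, fun k => ⟨_, _, Rrot_iterate_toPlane k p, ?_⟩, Rrot_iterate_six, ?_, ?_⟩
  · rw [sq_add_three_mul_sq_eq_four_mul_eisensteinNorm, eisensteinNorm_eisensteinRot_iterate, hp]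
    ring
  · intro k l hkl
    simp only [Rrot_iterate_toPlane] at hkl
    apply injective_eisensteinRot_iterate_zmod_three _ hp₃
    simp only [eisensteinRot_iterate_intCast, toPlane_injective hkl]
  · simpa only [Rrot_iterate_toPlane, exists_toPlane_eq_iff, ← eisensteinRot_iterate_intCast]
      using existsUnique_eisensteinRot_iterate_zmod_three _ hp₃
end

section
/- Let a ≥ 1 and b, N be natural numbers, and suppose that for every integer x one has b ≢ x² (mod a) and b ≢ 2x² (mod a) (b is neither a quadratic residue nor twice a quadratic residue modulo a). Then for every (x,y) ∈ ℤ² with x² + y² = aN + b, the eight points of the D8-orbit of (x,y) are pairwise distinct; in particular the dihedral group of order 8 acts freely on the set of integer solutions of x² + y² = aN + b. -/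
/-! The orbit of `(x, y)` has a repeated point exactly when `x = 0`, `y = 0` or `x = ±y`.
Each of these degeneracies makes `x² + y²` a square (`0² + y²`, `x² + 0²`) or twice a square
(`2x²`), and `x² + y² = aN + b ≡ b (mod a)` rules this out. -/

namespace Int

theorem d8Orbit_nodup {x y : ℤ} (hx : x ≠ 0) (hy : y ≠ 0) (hxy : x ≠ y) (hxny : x ≠ -y) :
    ([(x, y), (x, -y), (-x, y), (-x, -y), (y, x), (y, -x), (-y, x), (-y, -x)] :
      List (ℤ × ℤ)).Nodup := by
  simp [Prod.ext_iff]
  omega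

section SumOfSquares

variable {a b x y : ℤ}

theorem ModEq.ne_zero_of_sq_add_sq (h : b ≡ x ^ 2 + y ^ 2 [ZMOD a])
    (hb : ∀ z : ℤ, ¬ b ≡ z ^ 2 [ZMOD a]) : x ≠ 0 ∧ y ≠ 0 := by
  constructor
  · rintro rfl
    exact hb y (by simpa using h)
  · rintro rfl
    exact hb x (by simpa using h)

theorem ModEq.ne_and_ne_neg_of_sq_add_sq (h : b ≡ x ^ 2 + y ^ 2 [ZMOD a])
    (hb : ∀ z : ℤ, ¬ b ≡ 2 * z ^ 2 [ZMOD a]) : x ≠ y ∧ x ≠ -y := by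
  constructor
  · rintro rfl
    exact hb x (by rwa [← two_mul] at h)
  · rintro rfl
    exact hb y (by rwa [neg_sq, ← two_mul] at h)

end SumOfSquares

end Int

theorem D8_free_of_nonresidue_general (a b N : ℕ)
    (hb : ∀ x : ℤ, ¬ ((b : ℤ) ≡ x ^ 2 [ZMOD (a : ℤ)]) ∧
                   ¬ ((b : ℤ) ≡ 2 * x ^ 2 [ZMOD (a : ℤ)])) :
    ∀ x y : ℤ, x ^ 2 + y ^ 2 = (a : ℤ) * N + b →
      (([(x, y), (x, -y), (-x, y), (-x, -y), (y, x), (y, -x), (-y, x), (-y, -x)] :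
          List (ℤ × ℤ)).Nodup) := by
  intro x y h
  have hmod : (b : ℤ) ≡ x ^ 2 + y ^ 2 [ZMOD a] :=
    h ▸ (Int.add_modEq_right_iff.mpr (dvd_mul_right _ _)).symm
  obtain ⟨hx, hy⟩ := hmod.ne_zero_of_sq_add_sq fun z => (hb z).1
  obtain ⟨hxy, hxny⟩ := hmod.ne_and_ne_neg_of_sq_add_sq fun z => (hb z).2
  exact Int.d8Orbit_nodup hx hy hxy hxny

/-- **Corollary (freeness of the D8-action on U(aN+b)).**
If b is neither a quadratic residue nor twice a quadratic residue modulo a,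
then for every integer solution (x,y) of x² + y² = aN + b the eight points of
its D8-orbit are pairwise distinct: the dihedral group of order 8 acts freely
on the solution set. -/
theorem D8_free_of_nonresidue (a b N : ℕ) (ha : 1 ≤ a)
    (hb : ∀ x : ℤ, ¬ ((b : ℤ) ≡ x ^ 2 [ZMOD (a : ℤ)]) ∧
                   ¬ ((b : ℤ) ≡ 2 * x ^ 2 [ZMOD (a : ℤ)])) :
    ∀ x y : ℤ, x ^ 2 + y ^ 2 = (a : ℤ) * N + b →
      (([(x, y), (x, -y), (-x, y), (-x, -y), (y, x), (y, -x), (-y, x), (-y, -x)] :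
          List (ℤ × ℤ)).Nodup) :=
  D8_free_of_nonresidue_general a b N hb
end

section
/- Let N be a natural number and let x, y, z be integers satisfying x² + 2y² + 3z² = 48N + 30. Then there exist integers x', z' with 2x' = x − 3z and 2z' = x + z, and these satisfy x'² + 2y² + 3z'² = 48N + 30. In other words, the linear map R(x,y,z) = ((x−3z)/2, y, (x+z)/2), as well as the reflection s(x,y,z) = (x,y,−z), send integer solutions with second coordinate y to integer solutions with the same second coordinate y; hence the group G = ⟨R, s⟩ stabilises the set of integer points of the slice X_{N,y} of the quadric x² + 2y² + 3z² = 48N + 30. -/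
/-! `R` is integral on a solution because `x² + 3z² ≡ (x + z)² (mod 2)`, so evenness of
`x² + 3z² = 48N + 30 - 2y²` forces `x + z` to be even; writing `x + z = 2w`, the image
`(w - 2z, w)` has the same value of `x² + 3z²` by a polynomial identity. -/

theorem Int.even_add_of_even_sq_add_three_mul_sq {x z : ℤ} (h : Even (x ^ 2 + 3 * z ^ 2)) :
    Even (x + z) := by
  have hsq : Even ((x + z) ^ 2) := by
    have : (x + z) ^ 2 = x ^ 2 + 3 * z ^ 2 - 2 * (z ^ 2 - x * z) := by ring
    rw [this]
    exact h.sub (even_two_mul _)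
  exact (Int.even_pow.mp hsq).1

theorem sub_two_mul_sq_add_three_mul_sq {R : Type*} [CommRing R] {x z w : R}
    (hw : x + z = 2 * w) : (w - 2 * z) ^ 2 + 3 * w ^ 2 = x ^ 2 + 3 * z ^ 2 := by
  linear_combination (z - x - 2 * w) * hw

theorem Int.exists_two_mul_eq_sub_and_sq_add_three_mul_sq_eq {x z : ℤ}
    (h : Even (x ^ 2 + 3 * z ^ 2)) :
    ∃ x' z' : ℤ, 2 * x' = x - 3 * z ∧ 2 * z' = x + z ∧
      x' ^ 2 + 3 * z' ^ 2 = x ^ 2 + 3 * z ^ 2 := by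
  obtain ⟨w, hw⟩ := (Int.even_add_of_even_sq_add_three_mul_sq h).two_dvd
  exact ⟨w - 2 * z, w, by linarith, hw.symm, sub_two_mul_sq_add_three_mul_sq hw⟩

/-- **Proposition (type A₃⁽¹⁾, stability of X_{N,y}(ℤ) under G = ⟨R, s⟩).**
For any integer solution (x,y,z) of x² + 2y² + 3z² = 48N + 30 there exist
integers x', z' with 2x' = x − 3z and 2z' = x + z, and (x', y, z') is again a
solution; moreover (x, y, −z) is a solution. Hence R(x,y,z) =
((x−3z)/2, y, (x+z)/2) and s(x,y,z) = (x,y,−z) stabilise the set of integer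
points of the slice X_{N,y}. -/
theorem A31_R_and_s_stabilise_slice (N : ℕ) (x y z : ℤ)
    (h : x ^ 2 + 2 * y ^ 2 + 3 * z ^ 2 = 48 * (N : ℤ) + 30) :
    (∃ x' z' : ℤ, 2 * x' = x - 3 * z ∧ 2 * z' = x + z ∧
      x' ^ 2 + 2 * y ^ 2 + 3 * z' ^ 2 = 48 * (N : ℤ) + 30) ∧
    x ^ 2 + 2 * y ^ 2 + 3 * (-z) ^ 2 = 48 * (N : ℤ) + 30 := by
  have hEven : Even (x ^ 2 + 3 * z ^ 2) := ⟨24 * N + 15 - y ^ 2, by linarith⟩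
  obtain ⟨x', z', hx', hz', hq⟩ := Int.exists_two_mul_eq_sub_and_sq_add_three_mul_sq_eq hEven
  exact ⟨⟨x', z', hx', hz', by linarith⟩, by rwa [neg_sq]⟩
end
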